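/- arXiv:2602.14176 — 4 statements merged into one kernel-verified Lean document; each statement's English description precedes it below -/
import Mathlib

section
/- Let G be a group, H a subgroup, W(H) the family of subgroups that are intersections of conjugates of H, and for X ∈ W(H) let X̃ = X \ ⋃{Y ∈ W(H) : Y ⊊ X}. Suppose X ∈ W(H) with X̃ ≠ ∅. Then the stabilizer of X̃ under the conjugation action of G, namely {g ∈ G : g X̃ g⁻¹ = X̃}, equals the normalizer N_G(X) of X in G. -/
/-!
Conjugation by `g` is an automorphism of `G` that permutes `W(H)` and preserves strict
inclusion, so it carries `X̃` onto the tilde of `gXg⁻¹`. Because `W(H)` is closed under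
intersection, a point of `X̃` lying in some `Y ∈ W(H)` forces `X ≤ Y` (otherwise `X ⊓ Y` would
be a smaller member of `W(H)` containing it). Hence distinct members of `W(H)` have disjoint
tildes, and when `X̃` is nonempty, `g` stabilizes `X̃` exactly when `gXg⁻¹ = X`.
-/

open Pointwise

/-- The conjugate subgroup `g H g⁻¹`. -/
def conjSub {G : Type*} [Group G] (g : G) (H : Subgroup G) : Subgroup G :=
  Subgroup.map (MulAut.conj g).toMonoidHom H

/-- The family `W(H)` of subgroups that are intersections of nonempty families of
conjugates of `H`. -/
def Wfam {G : Type*} [Group G] (H : Subgroup G) : Set (Subgroup G) :=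
  {X | ∃ s : Set G, s.Nonempty ∧ X = ⨅ g ∈ s, conjSub g H}

/-- `X̃ = X \ ⋃ {Y ∈ W(H) : Y ⊊ X}`. -/
def tilde {G : Type*} [Group G] (H X : Subgroup G) : Set G :=
  (X : Set G) \ ⋃ Y ∈ {Y : Subgroup G | Y ∈ Wfam H ∧ Y < X}, (Y : Set G)

section
variable {G : Type*} [Group G]

lemma conjSub_eq_mapSubgroup (g : G) (K : Subgroup G) :
    conjSub g K = (MulAut.conj g).mapSubgroup K := rfl

lemma mem_conjSub {g x : G} {K : Subgroup G} : x ∈ conjSub g K ↔ g⁻¹ * x * g ∈ K := by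
  rw [conjSub, Subgroup.mem_map_equiv, MulAut.conj_symm_apply]

lemma conjSub_mul (g h : G) (K : Subgroup G) :
    conjSub (g * h) K = conjSub g (conjSub h K) := by
  simp only [conjSub, map_mul, Subgroup.map_map]
  rfl

lemma conjSub_one (K : Subgroup G) : conjSub 1 K = K := by
  ext x
  simp [mem_conjSub]

lemma conjSub_inv_conjSub (g : G) (K : Subgroup G) : conjSub g⁻¹ (conjSub g K) = K := by
  rw [← conjSub_mul, inv_mul_cancel, conjSub_one]

lemma conjSub_lt_conjSub_iff {g : G} {K L : Subgroup G} :
    conjSub g K < conjSub g L ↔ K < L :=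
  (MulAut.conj g).mapSubgroup.lt_iff_lt

lemma conjSub_iInf_conjSub (g : G) (s : Set G) (K : Subgroup G) :
    conjSub g (⨅ a ∈ s, conjSub a K) = ⨅ a ∈ s, conjSub (g * a) K := by
  simp only [conjSub_eq_mapSubgroup, OrderIso.map_iInf]
  simp only [← conjSub_eq_mapSubgroup, conjSub_mul]

lemma conjSub_eq_self_iff_mem_normalizer {g : G} {K : Subgroup G} :
    conjSub g K = K ↔ g ∈ Subgroup.normalizer (K : Set G) :=
  Subgroup.mem_normalizer_iff_map_conj_eq.symm

lemma conjSub_mem_Wfam {H Y : Subgroup G} (g : G) (hY : Y ∈ Wfam H) : conjSub g Y ∈ Wfam H := by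
  obtain ⟨s, hs, rfl⟩ := hY
  exact ⟨(g * ·) '' s, hs.image _, by rw [conjSub_iInf_conjSub, iInf_image]⟩

lemma inf_mem_Wfam {H X Y : Subgroup G} (hX : X ∈ Wfam H) (hY : Y ∈ Wfam H) :
    X ⊓ Y ∈ Wfam H := by
  obtain ⟨s, hs, rfl⟩ := hX
  obtain ⟨t, -, rfl⟩ := hY
  exact ⟨s ∪ t, hs.mono Set.subset_union_left, iInf_union.symm⟩

lemma mem_tilde {H X : Subgroup G} {x : G} :
    x ∈ tilde H X ↔ x ∈ X ∧ ∀ Y ∈ Wfam H, Y < X → x ∉ Y := by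
  simp only [tilde, Set.mem_sdiff, Set.mem_iUnion₂, Set.mem_ofPred_eq, SetLike.mem_coe,
    not_exists, and_imp]

lemma tilde_subset (H X : Subgroup G) : tilde H X ⊆ X :=
  Set.sdiff_subset

lemma le_of_mem_tilde {H X Y : Subgroup G} (hX : X ∈ Wfam H) (hY : Y ∈ Wfam H) {x : G}
    (hxX : x ∈ tilde H X) (hxY : x ∈ Y) : X ≤ Y := by
  rw [mem_tilde] at hxX
  by_contra hXY
  exact hxX.2 (X ⊓ Y) (inf_mem_Wfam hX hY) (inf_lt_left.2 hXY) ⟨hxX.1, hxY⟩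

lemma eq_of_mem_tilde_of_mem_tilde {H X Y : Subgroup G} (hX : X ∈ Wfam H) (hY : Y ∈ Wfam H)
    {x : G} (hxX : x ∈ tilde H X) (hxY : x ∈ tilde H Y) : X = Y :=
  le_antisymm (le_of_mem_tilde hX hY hxX (tilde_subset H Y hxY))
    (le_of_mem_tilde hY hX hxY (tilde_subset H X hxX))

lemma mem_tilde_conjSub_iff {H X : Subgroup G} {g x : G} :
    x ∈ tilde H (conjSub g X) ↔ g⁻¹ * x * g ∈ tilde H X := by
  rw [mem_tilde, mem_tilde, mem_conjSub]
  refine and_congr_right fun _ => ⟨fun h Y hY hYX hxY => ?_, fun h Y hY hYX hxY => ?_⟩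
  · refine h (conjSub g Y) (conjSub_mem_Wfam g hY) (conjSub_lt_conjSub_iff.2 hYX) ?_
    exact mem_conjSub.2 hxY
  · have hYX' : conjSub g⁻¹ Y < X := by
      simpa only [conjSub_inv_conjSub] using (conjSub_lt_conjSub_iff (g := g⁻¹)).2 hYX
    refine h (conjSub g⁻¹ Y) (conjSub_mem_Wfam g⁻¹ hY) hYX' (mem_conjSub.2 ?_)
    simpa [mul_assoc] using hxY

lemma image_conj_tilde (H X : Subgroup G) (g : G) :
    (fun x => g * x * g⁻¹) '' tilde H X = tilde H (conjSub g X) := by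
  rw [Set.image_eq_preimage_of_inverse (g := fun x => g⁻¹ * x * g)
    (fun x => by group) (fun x => by group)]
  ext x
  exact mem_tilde_conjSub_iff.symm

end

/-- if `X̃ ≠ ∅`, the stabilizer of `X̃` under conjugation equals
the normalizer of `X`. -/
theorem stabilizer_tilde_eq_normalizer {G : Type*} [Group G] (H : Subgroup G)
    (X : Subgroup G) (hX : X ∈ Wfam H) (hne : (tilde H X).Nonempty) (g : G) :
    (fun x => g * x * g⁻¹) '' tilde H X = tilde H X ↔ g ∈ Subgroup.normalizer (X : Set G) := by
  rw [image_conj_tilde, ← conjSub_eq_self_iff_mem_normalizer]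
  refine ⟨fun h => ?_, fun h => by rw [h]⟩
  obtain ⟨x, hx⟩ := hne
  exact eq_of_mem_tilde_of_mem_tilde (conjSub_mem_Wfam g hX) hX (h ▸ hx) hx
end

section
/- Let G be a countable group and H ≤ G a subgroup. Suppose there exists a subgroup K ≤ G such that K ∩ gHg⁻¹ = {e} for all g ∈ G, and suppose there exist a finite set F ⊆ K and ε > 0 such that for every ℓ²-function ξ on K, max_{t∈F} ‖t·ξ − ξ‖₂ ≥ ε‖ξ‖₂. Then for every ℓ²-function η on the coset space G/H, max_{t∈F} ‖t·η − η‖₂ ≥ ε‖η‖₂. -/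
open Pointwise

set_option maxHeartbeats 1000000
private lemma tsum_cs {ι : Type*} (b c : ι → ℝ) (hb : Summable (fun i => b i ^ 2))
    (hc : Summable (fun i => c i ^ 2)) :
    ∑' i, b i * c i ≤ Real.sqrt (∑' i, b i ^ 2) * Real.sqrt (∑' i, c i ^ 2) := by
  have habs : Summable fun i => |b i| * |c i| := by
    refine Summable.of_nonneg_of_le (fun i => by positivity)
      (fun i => ?_) ((hb.add hc).div_const 2)
    have := sq_nonneg (|b i| - |c i|)
    have h1 : |b i| ^ 2 = b i ^ 2 := sq_abs _
    have h2 : |c i| ^ 2 = c i ^ 2 := sq_abs _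
    nlinarith
  have hbc : Summable fun i => b i * c i := by
    refine Summable.of_abs ?_
    simpa [abs_mul] using habs
  have step1 : ∑' i, b i * c i ≤ ∑' i, |b i| * |c i| :=
    Summable.tsum_le_tsum (fun i => by rw [← abs_mul]; exact le_abs_self _) hbc habs
  refine step1.trans (Summable.tsum_le_of_sum_le habs fun s => ?_)
  have hCS := Finset.sum_mul_sq_le_sq_mul_sq s (fun i => |b i|) (fun i => |c i|)
  have h1 : ∑ i ∈ s, |b i| ^ 2 = ∑ i ∈ s, b i ^ 2 := by
    exact Finset.sum_congr rfl fun i _ => sq_abs _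
  have h2 : ∑ i ∈ s, |c i| ^ 2 = ∑ i ∈ s, c i ^ 2 := by
    exact Finset.sum_congr rfl fun i _ => sq_abs _
  rw [h1, h2] at hCS
  have hs1 : ∑ i ∈ s, b i ^ 2 ≤ ∑' i, b i ^ 2 :=
    Summable.sum_le_tsum s (fun i _ => sq_nonneg _) hb
  have hs2 : ∑ i ∈ s, c i ^ 2 ≤ ∑' i, c i ^ 2 :=
    Summable.sum_le_tsum s (fun i _ => sq_nonneg _) hc
  have hnn : (0:ℝ) ≤ ∑ i ∈ s, |b i| * |c i| :=
    Finset.sum_nonneg fun i _ => by positivity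
  have hb0 : (0:ℝ) ≤ ∑ i ∈ s, b i ^ 2 := Finset.sum_nonneg fun i _ => sq_nonneg _
  have hc0 : (0:ℝ) ≤ ∑ i ∈ s, c i ^ 2 := Finset.sum_nonneg fun i _ => sq_nonneg _
  calc ∑ i ∈ s, |b i| * |c i|
      = Real.sqrt ((∑ i ∈ s, |b i| * |c i|) ^ 2) := (Real.sqrt_sq hnn).symm
    _ ≤ Real.sqrt ((∑ i ∈ s, b i ^ 2) * ∑ i ∈ s, c i ^ 2) := Real.sqrt_le_sqrt hCS
    _ = Real.sqrt (∑ i ∈ s, b i ^ 2) * Real.sqrt (∑ i ∈ s, c i ^ 2) := Real.sqrt_mul hb0 _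
    _ ≤ Real.sqrt (∑' i, b i ^ 2) * Real.sqrt (∑' i, c i ^ 2) := by
        have := Real.sqrt_le_sqrt hs1
        have := Real.sqrt_le_sqrt hs2
        have := Real.sqrt_nonneg (∑ i ∈ s, b i ^ 2)
        have := Real.sqrt_nonneg (∑' i, c i ^ 2)
        nlinarith [Real.sqrt_nonneg (∑ i ∈ s, c i ^ 2)]

private lemma summable_diff_sq {ι : Type*} {a b : ι → ℝ} (ha : Summable (fun i => a i ^ 2))
    (hb : Summable (fun i => b i ^ 2)) : Summable fun i => (a i - b i) ^ 2 := by
  refine Summable.of_nonneg_of_le (fun i => sq_nonneg _) (fun i => ?_) ((ha.add hb).mul_left 2)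
  nlinarith [sq_nonneg (a i + b i)]

private lemma sqrt_tsum_add_le {ι : Type*} (b c : ι → ℝ) (hb : Summable (fun i => b i ^ 2))
    (hc : Summable (fun i => c i ^ 2)) :
    Real.sqrt (∑' i, (b i + c i) ^ 2) ≤ Real.sqrt (∑' i, b i ^ 2) + Real.sqrt (∑' i, c i ^ 2) := by
  set B := ∑' i, b i ^ 2 with hB
  set C := ∑' i, c i ^ 2 with hC
  have hB0 : 0 ≤ B := tsum_nonneg fun _ => sq_nonneg _
  have hC0 : 0 ≤ C := tsum_nonneg fun _ => sq_nonneg _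
  have habs : Summable fun i => |b i| * |c i| := by
    refine Summable.of_nonneg_of_le (fun i => by positivity)
      (fun i => ?_) ((hb.add hc).div_const 2)
    have h1 : |b i| ^ 2 = b i ^ 2 := sq_abs _
    have h2 : |c i| ^ 2 = c i ^ 2 := sq_abs _
    nlinarith [sq_nonneg (|b i| - |c i|)]
  have hbc : Summable fun i => b i * c i := by
    refine Summable.of_abs ?_; simpa [abs_mul] using habs
  have key : ∑' i, (b i + c i) ^ 2 ≤ (Real.sqrt B + Real.sqrt C) ^ 2 := by
    have hexp : ∀ i, (b i + c i) ^ 2 = b i ^ 2 + (2 * (b i * c i) + c i ^ 2) := by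
      intro i; ring
    have hsum2 : Summable fun i => 2 * (b i * c i) + c i ^ 2 := (hbc.mul_left 2).add hc
    have h1 : ∑' i, (b i + c i) ^ 2 = B + ∑' i, (2 * (b i * c i) + c i ^ 2) := by
      rw [hB]
      rw [← Summable.tsum_add hb hsum2]
      exact tsum_congr hexp
    have h2 : ∑' i, (2 * (b i * c i) + c i ^ 2) = 2 * (∑' i, b i * c i) + C := by
      rw [hC, ← tsum_mul_left, ← Summable.tsum_add (hbc.mul_left 2) hc]
    have hCS := tsum_cs b c hb hc
    have hsq : (Real.sqrt B + Real.sqrt C) ^ 2 = B + (2 * (Real.sqrt B * Real.sqrt C) + C) := by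
      rw [add_sq, Real.sq_sqrt hB0, Real.sq_sqrt hC0]; ring
    rw [h1, h2, hsq]
    nlinarith
  calc Real.sqrt (∑' i, (b i + c i) ^ 2) ≤ Real.sqrt ((Real.sqrt B + Real.sqrt C) ^ 2) :=
        Real.sqrt_le_sqrt key
    _ = Real.sqrt B + Real.sqrt C := Real.sqrt_sq (by positivity)

private lemma sqrt_diff_sq_le {ι : Type*} (a b : ι → ℝ) (ha : Summable (fun i => a i ^ 2))
    (hb : Summable (fun i => b i ^ 2)) :
    (Real.sqrt (∑' i, a i ^ 2) - Real.sqrt (∑' i, b i ^ 2)) ^ 2 ≤ ∑' i, (a i - b i) ^ 2 := by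
  have hc : Summable fun i => (a i - b i) ^ 2 := summable_diff_sq ha hb
  set A := ∑' i, a i ^ 2
  set B := ∑' i, b i ^ 2
  set C := ∑' i, (a i - b i) ^ 2 with hCdef
  have hC0 : 0 ≤ C := tsum_nonneg fun _ => sq_nonneg _
  have h1 : Real.sqrt A ≤ Real.sqrt B + Real.sqrt C := by
    have := sqrt_tsum_add_le b (fun i => a i - b i) hb hc
    simpa using this
  have h2 : Real.sqrt B ≤ Real.sqrt A + Real.sqrt C := by
    have hc' : Summable fun i => (b i - a i) ^ 2 := summable_diff_sq hb ha
    have := sqrt_tsum_add_le a (fun i => b i - a i) ha hc'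
    have heq : ∑' i, (b i - a i) ^ 2 = C := by
      rw [hCdef]; exact tsum_congr fun i => by ring
    simp only [heq] at this
    simpa using this
  have habs : |Real.sqrt A - Real.sqrt B| ≤ Real.sqrt C := by
    rw [abs_sub_le_iff]; constructor <;> linarith
  calc (Real.sqrt A - Real.sqrt B) ^ 2 = |Real.sqrt A - Real.sqrt B| ^ 2 := (sq_abs _).symm
    _ ≤ Real.sqrt C ^ 2 := by
        have h0 : (0:ℝ) ≤ |Real.sqrt A - Real.sqrt B| := abs_nonneg _
        exact pow_le_pow_left₀ h0 habs 2
    _ = C := Real.sq_sqrt hC0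

/-- if `K ∩ gHg⁻¹ = {e}` for all `g` and the `K`-action on `ℓ²(K)` has
spectral gap `(F, ε)`, then the `K`-action on `ℓ²(G/H)` has the same spectral gap. -/
theorem spectral_gap_transfer {G : Type*} [Group G] [Countable G] (H K : Subgroup G)
    (htriv : ∀ g : G, K ⊓ conjSub g H = ⊥)
    (F : Finset K) (ε : ℝ) (hε : 0 < ε)
    (hgap : ∀ ξ : K → ℝ, Summable (fun k => ξ k ^ 2) →
      ∃ t ∈ F, ε ^ 2 * ∑' k, ξ k ^ 2 ≤ ∑' k, (ξ (t⁻¹ * k) - ξ k) ^ 2) :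
    ∀ η : G ⧸ H → ℝ, Summable (fun x => η x ^ 2) →
      ∃ t ∈ F, ε ^ 2 * ∑' x, η x ^ 2 ≤ ∑' x, (η ((t : G)⁻¹ • x) - η x) ^ 2 := by
  intro η hη
  -- freeness of the K-action on G ⧸ H
  have hfree : ∀ (k : K) (x : G ⧸ H), (k : G) • x = x → k = 1 := by
    intro k x hx
    obtain ⟨g, rfl⟩ := QuotientGroup.mk_surjective x
    have hmk : ((k : G) * g : G ⧸ H) = (g : G ⧸ H) := hx
    have hmem : g⁻¹ * ((k : G) * g) ∈ H := (QuotientGroup.eq).mp hmk.symm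
    have hconj : (k : G) ∈ conjSub g H := by
      rw [conjSub, Subgroup.mem_map]
      refine ⟨g⁻¹ * ((k : G) * g), hmem, ?_⟩
      simp [MulAut.conj_apply, mul_assoc]
    have : (k : G) ∈ K ⊓ conjSub g H := ⟨k.2, hconj⟩
    rw [htriv g] at this
    exact Subtype.ext this
  -- the orbit setoid
  letI r : Setoid (G ⧸ H) :=
    ⟨fun x y => ∃ k : K, (k : G) • y = x,
      ⟨fun x => ⟨1, by simp⟩,
       fun {x y} h => by
        obtain ⟨k, hk⟩ := h
        exact ⟨k⁻¹, by rw [← hk]; simp [← mul_smul]⟩,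
       fun {x y z} h1 h2 => by
        obtain ⟨k, hk⟩ := h1; obtain ⟨l, hl⟩ := h2
        exact ⟨k * l, by rw [← hk, ← hl]; simp [mul_smul]⟩⟩⟩
  let Q := Quotient r
  let f : K × Q → G ⧸ H := fun p => (p.1 : G) • p.2.out
  have hbij : Function.Bijective f := by
    constructor
    · rintro ⟨k₁, q₁⟩ ⟨k₂, q₂⟩ hf
      have hfeq : (k₁ : G) • q₁.out = (k₂ : G) • q₂.out := hf
      have hrel : r.r q₁.out q₂.out := by
        refine ⟨k₁⁻¹ * k₂, ?_⟩
        push_cast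
        rw [mul_smul, ← hfeq, ← mul_smul]
        simp
      have hq : q₁ = q₂ := by
        have := Quotient.sound (s := r) hrel
        rwa [Quotient.out_eq, Quotient.out_eq] at this
      subst hq
      have hk : (k₂⁻¹ * k₁ : K) = 1 := by
        refine hfree _ q₁.out ?_
        push_cast
        rw [mul_smul, hfeq, ← mul_smul]
        simp
      have : k₁ = k₂ := by
        have := mul_eq_one_iff_inv_eq.mp hk
        simpa [eq_comm] using this.symm
      simp [this]
    · intro x
      have hrel : r.r (Quotient.mk r x).out x := Quotient.exact (Quotient.out_eq _)
      obtain ⟨k, hk⟩ := hrel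
      refine ⟨⟨k⁻¹, Quotient.mk r x⟩, ?_⟩
      show ((k⁻¹ : K) : G) • (Quotient.mk r x).out = x
      rw [← hk]
      push_cast
      rw [← mul_smul]
      simp
  let e : K × Q ≃ G ⧸ H := Equiv.ofBijective f hbij
  have heapp : ∀ p : K × Q, e p = (p.1 : G) • p.2.out := fun p => rfl
  have hequiv : ∀ (t k : K) (q : Q), e (t⁻¹ * k, q) = (t : G)⁻¹ • e (k, q) := by
    intro t k q
    rw [heapp, heapp]
    push_cast
    rw [mul_smul]
  -- summability over K × Q
  have hsum : Summable fun p : K × Q => η (e p) ^ 2 := e.summable_iff.mpr hη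
  have hA : ∀ k : K, Summable fun q : Q => η (e (k, q)) ^ 2 := fun k => hsum.prod_factor k
  set ξ : K → ℝ := fun k => Real.sqrt (∑' q : Q, η (e (k, q)) ^ 2) with hξdef
  have hξ2 : ∀ k, ξ k ^ 2 = ∑' q : Q, η (e (k, q)) ^ 2 := fun k =>
    Real.sq_sqrt (tsum_nonneg fun _ => sq_nonneg _)
  have hξsum : Summable fun k => ξ k ^ 2 := by
    refine (summable_congr hξ2).mpr ?_
    exact hsum.prod
  obtain ⟨t, htF, hineq⟩ := hgap ξ hξsum
  refine ⟨t, htF, ?_⟩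
  -- identify the total mass
  have hmass : ∑' x, η x ^ 2 = ∑' k, ξ k ^ 2 := by
    rw [tsum_congr hξ2, ← Summable.tsum_prod hsum, e.tsum_eq (fun x => η x ^ 2)]
  -- summability of the shifted function on G ⧸ H
  have hηt : Summable fun x : G ⧸ H => η ((t : G)⁻¹ • x) ^ 2 := by
    exact (MulAction.toPerm ((t : G)⁻¹) : Equiv.Perm (G ⧸ H)).summable_iff.mpr hη
  have hg : Summable fun x : G ⧸ H => (η ((t : G)⁻¹ • x) - η x) ^ 2 :=
    summable_diff_sq hηt hη
  have hge : Summable fun p : K × Q => (η ((t : G)⁻¹ • e p) - η (e p)) ^ 2 :=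
    e.summable_iff.mpr hg
  -- pointwise inequality over K
  have hξshift : Summable fun k => ξ (t⁻¹ * k) ^ 2 :=
    hξsum.comp_injective (mul_right_injective t⁻¹)
  have hLHS : Summable fun k => (ξ (t⁻¹ * k) - ξ k) ^ 2 := summable_diff_sq hξshift hξsum
  have hRHS : Summable fun k => ∑' q : Q, (η ((t : G)⁻¹ • e (k, q)) - η (e (k, q))) ^ 2 :=
    hge.prod
  have hpt : ∀ k : K, (ξ (t⁻¹ * k) - ξ k) ^ 2 ≤
      ∑' q : Q, (η ((t : G)⁻¹ • e (k, q)) - η (e (k, q))) ^ 2 := by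
    intro k
    have hfun : (fun q : Q => η (e (t⁻¹ * k, q)) ^ 2) =
        fun q : Q => η ((t : G)⁻¹ • e (k, q)) ^ 2 :=
      funext fun q => by rw [hequiv t k q]
    have hat : Summable fun q : Q => η ((t : G)⁻¹ • e (k, q)) ^ 2 := by
      have h := hA (t⁻¹ * k)
      rwa [hfun] at h
    have h2 := sqrt_diff_sq_le (fun q : Q => η ((t : G)⁻¹ • e (k, q)))
        (fun q : Q => η (e (k, q))) hat (hA k)
    have h1 : ξ (t⁻¹ * k) = Real.sqrt (∑' q : Q, η ((t : G)⁻¹ • e (k, q)) ^ 2) := by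
      show Real.sqrt (∑' q : Q, η (e (t⁻¹ * k, q)) ^ 2) = _
      rw [hfun]
    rw [h1]
    exact h2
  -- assemble
  have hstep : ∑' k, (ξ (t⁻¹ * k) - ξ k) ^ 2 ≤
      ∑' x, (η ((t : G)⁻¹ • x) - η x) ^ 2 := by
    calc ∑' k, (ξ (t⁻¹ * k) - ξ k) ^ 2
        ≤ ∑' k, ∑' q : Q, (η ((t : G)⁻¹ • e (k, q)) - η (e (k, q))) ^ 2 :=
          Summable.tsum_le_tsum hpt hLHS hRHS
      _ = ∑' p : K × Q, (η ((t : G)⁻¹ • e p) - η (e p)) ^ 2 := (Summable.tsum_prod hge).symm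
      _ = ∑' x, (η ((t : G)⁻¹ • x) - η x) ^ 2 :=
          e.tsum_eq (fun x => (η ((t : G)⁻¹ • x) - η x) ^ 2)
  rw [hmass]
  exact hineq.trans hstep
end

section
/- Let G be a countable group, H ≤ G, and suppose there exists a subgroup K ≤ G such that for every g ∈ G and every k ∈ K with k ≠ e, we have (gkg⁻¹)H(gkg⁻¹)⁻¹ ∩ H = {e}. Then for every X in the family W(H) of intersections of conjugates of H with X ≠ {e}, and for every g ∈ G and e ≠ k ∈ K, the element gkg⁻¹ does not lie in the normalizer N_G(X). -/
open Pointwise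

section

variable {G : Type*} [Group G]

theorem conjSub_mul_s8 (a b : G) (H : Subgroup G) :
    conjSub (a * b) H = conjSub a (conjSub b H) := by
  rw [conjSub, conjSub, conjSub, Subgroup.map_map, map_mul]; rfl

theorem conjSub_inf (a : G) (H K : Subgroup G) :
    conjSub a (H ⊓ K) = conjSub a H ⊓ conjSub a K :=
  Subgroup.map_inf _ _ _ (MulEquiv.injective _)

theorem conjSub_bot (a : G) : conjSub a (⊥ : Subgroup G) = ⊥ :=
  Subgroup.map_bot _

theorem conjSub_mono (a : G) {H K : Subgroup G} (h : H ≤ K) : conjSub a H ≤ conjSub a K :=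
  Subgroup.map_mono h

theorem conjSub_eq_self_of_mem_normalizer {X : Subgroup G} {c : G}
    (hc : c ∈ Subgroup.normalizer (X : Set G)) : conjSub c X = X :=
  Subgroup.mem_normalizer_iff_map_conj_eq.mp hc

theorem exists_le_conjSub_of_mem_Wfam {H X : Subgroup G} (hX : X ∈ Wfam H) :
    ∃ a, X ≤ conjSub a H := by
  obtain ⟨s, ⟨a, ha⟩, rfl⟩ := hX
  exact ⟨a, biInf_le _ ha⟩

theorem eq_bot_of_le_conjSub_of_mem_normalizer {H X : Subgroup G} {a c : G}
    (hXa : X ≤ conjSub a H) (hc : c ∈ Subgroup.normalizer (X : Set G))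
    (hdisj : conjSub (a⁻¹ * c * a) H ⊓ H = ⊥) : X = ⊥ := by
  refine le_bot_iff.mp ?_
  calc X ≤ conjSub (c * a) H ⊓ conjSub a H := by
        refine le_inf ?_ hXa
        rw [conjSub_mul_s8, ← conjSub_eq_self_of_mem_normalizer hc]
        exact conjSub_mono c hXa
    _ = conjSub a (conjSub (a⁻¹ * c * a) H ⊓ H) := by
        rw [conjSub_inf, ← conjSub_mul_s8]; group
    _ = ⊥ := by rw [hdisj, conjSub_bot]

end

theorem not_mem_normalizer_general {G : Type*} [Group G] (H K : Subgroup G)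
    (hmal : ∀ (g : G), ∀ k ∈ K, k ≠ 1 → conjSub (g * k * g⁻¹) H ⊓ H = ⊥) :
    ∀ X ∈ Wfam H, X ≠ ⊥ →
      ∀ (g : G), ∀ k ∈ K, k ≠ 1 → g * k * g⁻¹ ∉ Subgroup.normalizer (X : Set G) := by
  intro X hW hX g k hk hk1 hc
  obtain ⟨a, hXa⟩ := exists_le_conjSub_of_mem_Wfam hW
  refine hX (eq_bot_of_le_conjSub_of_mem_normalizer hXa hc ?_)
  convert hmal (a⁻¹ * g) k hk hk1 using 3
  group

/-- if `(gkg⁻¹)H(gkg⁻¹)⁻¹ ∩ H = {e}` for all `g ∈ G` and `e ≠ k ∈ K`,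
then `gkg⁻¹` never normalizes a nontrivial member of `W(H)`. -/
theorem not_mem_normalizer {G : Type*} [Group G] [Countable G] (H K : Subgroup G)
    (hmal : ∀ (g : G), ∀ k ∈ K, k ≠ 1 → conjSub (g * k * g⁻¹) H ⊓ H = ⊥) :
    ∀ X ∈ Wfam H, X ≠ ⊥ →
      ∀ (g : G), ∀ k ∈ K, k ≠ 1 → g * k * g⁻¹ ∉ Subgroup.normalizer (X : Set G) :=
  not_mem_normalizer_general H K hmal
end

section
/- Let G be a countable group acting on a countable set S, and suppose there exists a G-invariant finitely additive probability measure (mean) on S, i.e., a state on ℓ∞(S) invariant under the G-action. Then for every finite F ⊆ G and ε > 0 there exists a nonzero ξ ∈ ℓ²(S) with ‖g·ξ − ξ‖₂ ≤ ε‖ξ‖₂ for all g ∈ F. Conversely, if such almost-invariant ℓ²-vectors exist for every finite F and ε > 0, then there is a G-invariant mean on S. -/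
/-!
If no finitely supported probability vector `f` on `S` had `(g • f - f)_{g ∈ F}` of `ℓ¹`-norm
below `ε²`, Hahn–Banach would separate these vectors from `0` by a bounded function `h` on
`F × S`, so that `∑_{g ∈ F} (h_g (g • t) - h_g t) ≥ α > 0` for every `t`. Integrating this
inequality against an invariant mean, after rounding `h` to finitely many values, gives `0 ≥ α`.
Then `ξ = √f` is almost invariant because `(√a - √b)² ≤ |a - b|`.

Conversely, an almost invariant `ξ` gives the mean `A ↦ ∑_{s ∈ A} ξ(s)² / ‖ξ‖²`, which `g ∈ F`
moves by at most `2ε`; an ultrafilter limit of these means in the compact space `[0,1]^{𝒫(S)}`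
is an invariant mean.
-/

open Pointwise

section

open Set Filter Topology MeasureTheory

variable {G S : Type*} [Group G] [MulAction G S]

structure IsMean (m : Set S → ℝ) : Prop where
  map_univ : m univ = 1
  nonneg : ∀ A, 0 ≤ m A
  map_union : ∀ A B, Disjoint A B → m (A ∪ B) = m A + m B

namespace IsMean

variable {m : Set S → ℝ}

theorem map_empty (hm : IsMean m) : m ∅ = 0 := by
  have := hm.map_union ∅ ∅ disjoint_bot_left
  rw [union_self] at this
  linarith

theorem le_one (hm : IsMean m) (A : Set S) : m A ≤ 1 := by
  have := hm.map_union A Aᶜ disjoint_compl_right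
  rw [union_compl_self, hm.map_univ] at this
  linarith [hm.nonneg Aᶜ]

end IsMean

section Integral

variable [MeasurableSpace S] {m : Set S → ℝ}

theorem MeasureTheory.SimpleFunc.coe_finset_sum {ι : Type*} (s : Finset ι)
    (f : ι → SimpleFunc S ℝ) : ⇑(∑ i ∈ s, f i) = ∑ i ∈ s, ⇑(f i) :=
  map_sum (⟨⟨DFunLike.coe, rfl⟩, fun _ _ => rfl⟩ : SimpleFunc S ℝ →+ S → ℝ) f s

-- Against the zero measure every set is "finite" and every simple function integrable, so
-- Mathlib's `setToSimpleFunc` calculus applies to the merely finitely additive `m`.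
noncomputable def meanIntegral (m : Set S → ℝ) (f : SimpleFunc S ℝ) : ℝ :=
  f.setToSimpleFunc fun A => m A • ContinuousLinearMap.id ℝ ℝ

namespace IsMean

theorem finMeasAdditive (hm : IsMean m) :
    FinMeasAdditive (0 : Measure S) fun A => m A • ContinuousLinearMap.id ℝ ℝ :=
  fun A B _ _ _ _ hAB => by simp only [hm.map_union A B hAB, add_smul]

theorem meanIntegral_sub (hm : IsMean m) (f g : SimpleFunc S ℝ) :
    meanIntegral m (f - g) = meanIntegral m f - meanIntegral m g :=
  SimpleFunc.setToSimpleFunc_sub _ hm.finMeasAdditive integrable_zero_measure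
    integrable_zero_measure

theorem meanIntegral_sum (hm : IsMean m) {ι : Type*} (s : Finset ι) (f : ι → SimpleFunc S ℝ) :
    meanIntegral m (∑ i ∈ s, f i) = ∑ i ∈ s, meanIntegral m (f i) :=
  map_sum (AddMonoidHom.mk' (meanIntegral m) fun _ _ =>
    SimpleFunc.setToSimpleFunc_add _ hm.finMeasAdditive integrable_zero_measure
      integrable_zero_measure) f s

theorem meanIntegral_const (hm : IsMean m) (c : ℝ) :
    meanIntegral m (SimpleFunc.const S c) = c := by
  rw [meanIntegral, SimpleFunc.setToSimpleFunc_const _ (by simp [hm.map_empty])]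
  simp [hm.map_univ]

theorem meanIntegral_mono (hm : IsMean m) {f g : SimpleFunc S ℝ} (hfg : f ≤ g) :
    meanIntegral m f ≤ meanIntegral m g :=
  SimpleFunc.setToSimpleFunc_mono hm.finMeasAdditive
    (fun A _ _ x hx => by simpa using mul_nonneg (hm.nonneg A) hx)
    integrable_zero_measure integrable_zero_measure hfg

theorem meanIntegral_comp (hm : IsMean m) {e : S → S} (he : Measurable e)
    (hme : ∀ A, m (e ⁻¹' A) = m A) (f : SimpleFunc S ℝ) :
    meanIntegral m (f.comp e he) = meanIntegral m f := by
  have hT : (fun A => m A • ContinuousLinearMap.id ℝ ℝ) ∅ = 0 := by simp [hm.map_empty]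
  rw [meanIntegral, SimpleFunc.setToSimpleFunc_eq_sum_of_subset _ hT
    ((Finset.filter_subset _ _).trans (f.range_comp_subset_range he)), meanIntegral,
    SimpleFunc.setToSimpleFunc_eq_sum_filter, Finset.sum_filter_of_ne]
  · refine Finset.sum_congr rfl fun x _ => ?_
    rw [SimpleFunc.coe_comp, preimage_comp, hme]
  · intro x _ hx
    contrapose! hx
    simp [hx]

end IsMean

end Integral

theorem finite_range_floor_of_abs_le {u : S → ℝ} {M : ℝ} (hu : ∀ x, |u x| ≤ M) :
    (range fun x => (⌊u x⌋ : ℝ)).Finite := by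
  refine ((Set.finite_Icc ⌊-M⌋ ⌊M⌋).image ((↑) : ℤ → ℝ)).subset ?_
  rintro _ ⟨x, rfl⟩
  exact ⟨_, ⟨Int.floor_mono (neg_le_of_abs_le (hu x)), Int.floor_mono (le_of_abs_le (hu x))⟩, rfl⟩

theorem IsMean.nonpos_of_le_sum_sub {m : Set S → ℝ} (hm : IsMean m)
    (hinv : ∀ (g : G) A, m (g • A) = m A) {ι : Type*} (s : Finset ι) (γ : ι → G)
    (u : ι → S → ℝ) {M : ℝ} (hu : ∀ i x, |u i x| ≤ M) {α : ℝ}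
    (hα : ∀ x, α ≤ ∑ i ∈ s, (u i (γ i • x) - u i x)) : α ≤ 0 := by
  let _ : MeasurableSpace S := ⊤
  by_contra! hα0
  obtain ⟨N, hN⟩ := exists_nat_gt (s.card / α)
  have hNu : ∀ i x, |N * u i x| ≤ N * M := fun i x => by
    rw [abs_mul, Nat.abs_cast]
    exact mul_le_mul_of_nonneg_left (hu i x) N.cast_nonneg
  let φ : ι → SimpleFunc S ℝ := fun i =>
    ⟨fun x => ⌊N * u i x⌋, fun _ => trivial, finite_range_floor_of_abs_le (hNu i)⟩
  have hle : SimpleFunc.const S (N * α - s.card) ≤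
      ∑ i ∈ s, ((φ i).comp (γ i • ·) measurable_from_top - φ i) := by
    intro x
    simp only [SimpleFunc.coe_finset_sum, Finset.sum_apply, SimpleFunc.coe_sub, Pi.sub_apply,
      SimpleFunc.coe_comp, Function.comp_apply, SimpleFunc.coe_const, Function.const_apply]
    have hfloor : ∀ i ∈ s, N * (u i (γ i • x) - u i x) - 1 ≤
        ⌊N * u i (γ i • x)⌋ - (⌊N * u i x⌋ : ℝ) := fun i _ => by
      linarith [Int.sub_one_lt_floor (N * u i (γ i • x)), Int.floor_le (N * u i x)]
    calc N * α - s.card ≤ ∑ i ∈ s, (N * (u i (γ i • x) - u i x) - 1) := by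
          rw [Finset.sum_sub_distrib, ← Finset.mul_sum, Finset.sum_const, nsmul_one]
          gcongr
          exact hα x
      _ ≤ _ := Finset.sum_le_sum hfloor
  have hcomp : ∀ i, meanIntegral m ((φ i).comp (γ i • ·) measurable_from_top) =
      meanIntegral m (φ i) := fun i =>
    hm.meanIntegral_comp _ (fun A => by rw [preimage_smul, hinv]) _
  have hint := hm.meanIntegral_mono hle
  rw [hm.meanIntegral_const, hm.meanIntegral_sum] at hint
  simp only [hm.meanIntegral_sub, hcomp, sub_self, Finset.sum_const_zero] at hint
  rw [div_lt_iff₀ hα0] at hN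
  linarith

def finsuppStdSimplex (S : Type*) : Set (S →₀ ℝ) :=
  {f | 0 ≤ f ∧ f.sum (fun _ a => a) = 1}

theorem convex_finsuppStdSimplex : Convex ℝ (finsuppStdSimplex S) :=
  (convex_Ici 0).inter
    ((convex_singleton 1).linear_preimage (Finsupp.lsum ℝ fun _ : S => LinearMap.id))

theorem single_mem_finsuppStdSimplex (t : S) : Finsupp.single t 1 ∈ finsuppStdSimplex S :=
  ⟨Finsupp.single_nonneg.2 zero_le_one, by simp⟩

open Classical in
noncomputable def diracTranslateSub (F : Finset G) (t : S) : lp (fun _ : F × S => ℝ) 1 :=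
  ∑ g : F, (lp.single 1 (g, (g : G) • t) 1 - lp.single 1 (g, t) 1)

noncomputable def translateSub (F : Finset G) : (S →₀ ℝ) →ₗ[ℝ] lp (fun _ : F × S => ℝ) 1 :=
  Finsupp.linearCombination ℝ (diracTranslateSub F)

theorem translateSub_apply (F : Finset G) (f : S →₀ ℝ) (g : F) (s : S) :
    translateSub F f (g, s) = f ((g : G)⁻¹ • s) - f s := by
  classical
  induction f using Finsupp.induction_linear with
  | zero => simp
  | add f f' hf hf' => simp [hf, hf']; ring
  | single t c =>
    simp only [translateSub, Finsupp.linearCombination_single, diracTranslateSub, lp.coeFn_smul,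
      lp.coeFn_sum, lp.coeFn_sub, Pi.smul_apply, Finset.sum_apply, Pi.sub_apply, lp.coeFn_single,
      Pi.single_apply, Prod.mk.injEq, smul_eq_mul, Finset.sum_sub_distrib, Finsupp.single_apply]
    simp only [ite_and, Finset.sum_ite_eq, Finset.mem_univ, if_true, eq_inv_smul_iff, eq_comm]
    split_ifs <;> ring

theorem lp.summable_abs {ι : Type*} (x : lp (fun _ : ι => ℝ) 1) : Summable fun i => |x i| := by
  simpa using (lp.memℓp x).summable (by norm_num)

theorem lp.tsum_abs_comp_le_norm {ι κ : Type*} (x : lp (fun _ : ι => ℝ) 1) {e : κ → ι}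
    (he : Function.Injective e) : ∑' k, |x (e k)| ≤ ‖x‖ := by
  rw [lp.norm_eq_tsum_rpow (by norm_num)]
  simp only [ENNReal.toReal_one, Real.rpow_one, Real.norm_eq_abs, div_one]
  exact tsum_comp_le_tsum_of_inj (lp.summable_abs x) (fun i => abs_nonneg (x i)) he

theorem IsMean.exists_norm_translateSub_lt {m : Set S → ℝ} (hm : IsMean m)
    (hinv : ∀ (g : G) A, m (g • A) = m A) (F : Finset G) {δ : ℝ} (hδ : 0 < δ) :
    ∃ f ∈ finsuppStdSimplex S, ‖translateSub F f‖ < δ := by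
  classical
  by_contra! hfar
  have hdisj : Disjoint (Metric.ball 0 δ) (translateSub F '' finsuppStdSimplex S) := by
    refine Set.disjoint_left.2 fun x hx ⟨f, hf, hfx⟩ => ?_
    rw [mem_ball_zero_iff, ← hfx] at hx
    exact (hfar f hf).not_gt hx
  obtain ⟨ψ, u, hball, hsep⟩ := geometric_hahn_banach_open (convex_ball 0 δ) Metric.isOpen_ball
    (convex_finsuppStdSimplex.linear_image _) hdisj
  have hu : 0 < u := by simpa using hball 0 (Metric.mem_ball_self hδ)
  refine hu.not_ge (hm.nonpos_of_le_sum_sub hinv Finset.univ (fun g : F => (g : G))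
    (fun g s => ψ (lp.single 1 (g, s) 1)) (M := ‖ψ‖) (fun g s => ?_) (fun t => ?_))
  · simpa using ψ.le_opNorm (lp.single 1 (g, s) 1)
  · simpa [translateSub, diracTranslateSub] using
      hsep _ (mem_image_of_mem _ (single_mem_finsuppStdSimplex t))

theorem sq_sqrt_sub_sqrt_le_abs_sub {a b : ℝ} (ha : 0 ≤ a) (hb : 0 ≤ b) :
    (√a - √b) ^ 2 ≤ |a - b| := by
  have hsum : |√a - √b| ≤ √a + √b :=
    abs_sub_le_iff.2 ⟨by linarith [Real.sqrt_nonneg b], by linarith [Real.sqrt_nonneg a]⟩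
  calc (√a - √b) ^ 2 = |√a - √b| * |√a - √b| := by rw [← sq_abs, sq]
    _ ≤ |√a - √b| * (√a + √b) := mul_le_mul_of_nonneg_left hsum (abs_nonneg _)
    _ = |a - b| := by
      rw [← abs_of_nonneg (by positivity : 0 ≤ √a + √b), ← abs_mul]
      congr 1
      linear_combination Real.sq_sqrt ha - Real.sq_sqrt hb

theorem exists_almost_invariant_of_norm_translateSub_le {F : Finset G} {f : S →₀ ℝ}
    (hf : f ∈ finsuppStdSimplex S) {ε : ℝ} (hfF : ‖translateSub F f‖ ≤ ε ^ 2) :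
    ∃ ξ : S → ℝ, Summable (fun s => ξ s ^ 2) ∧ (∑' s, ξ s ^ 2) ≠ 0 ∧
      ∀ g ∈ F, ∑' s, (ξ (g⁻¹ • s) - ξ s) ^ 2 ≤ ε ^ 2 * ∑' s, ξ s ^ 2 := by
  obtain ⟨hf0, hf1⟩ := hf
  have hsq : ∀ s, √(f s) ^ 2 = f s := fun s => Real.sq_sqrt (hf0 s)
  have htsum : ∑' s, f s = 1 :=
    (tsum_eq_sum fun s hs => Finsupp.notMem_support_iff.1 hs).trans hf1
  refine ⟨fun s => √(f s), ?_, ?_, fun g hg => ?_⟩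
  · simpa only [hsq] using summable_of_ne_finset_zero fun s hs => Finsupp.notMem_support_iff.1 hs
  · simp [hsq, htsum]
  · have hinj : Function.Injective fun s : S => ((⟨g, hg⟩ : F), s) :=
      fun _ _ h => (Prod.mk.inj h).2
    have hsum := (lp.summable_abs (translateSub F f)).comp_injective hinj
    have hle := lp.tsum_abs_comp_le_norm (translateSub F f) hinj
    simp only [Function.comp_def, translateSub_apply] at hsum hle
    have hpt := fun s => sq_sqrt_sub_sqrt_le_abs_sub (hf0 (g⁻¹ • s)) (hf0 s)
    simp only [hsq, htsum, mul_one]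
    exact (Summable.tsum_le_tsum hpt (hsum.of_nonneg_of_le (fun s => sq_nonneg _) hpt) hsum).trans
      (hle.trans hfF)

noncomputable def sqWeightMean (ξ : S → ℝ) (A : Set S) : ℝ :=
  (∑' s, A.indicator (fun s => ξ s ^ 2) s) / ∑' s, ξ s ^ 2

theorem isMean_sqWeightMean {ξ : S → ℝ} (hξ : Summable fun s => ξ s ^ 2)
    (hξ0 : ∑' s, ξ s ^ 2 ≠ 0) : IsMean (sqWeightMean ξ) where
  map_univ := by simp [sqWeightMean, hξ0]
  nonneg A := div_nonneg (tsum_nonneg fun s => indicator_nonneg (fun s _ => sq_nonneg _) s)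
    (tsum_nonneg fun s => sq_nonneg _)
  map_union A B hAB := by
    rw [sqWeightMean, indicator_union_of_disjoint hAB,
      Summable.tsum_add (hξ.indicator A) (hξ.indicator B), add_div]
    rfl

theorem tsum_indicator_smul_set (g : G) (A : Set S) (f : S → ℝ) :
    ∑' s, (g • A).indicator f s = ∑' s, A.indicator (fun s => f (g • s)) s := by
  rw [← (MulAction.toPerm g).tsum_eq]
  congr with s
  by_cases hs : s ∈ A <;> simp [hs, smul_mem_smul_set_iff]

-- AM-GM applied to `|a - b| * |a + b|`; it replaces a Cauchy–Schwarz estimate.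
theorem abs_sq_sub_sq_le {a b ε : ℝ} (hε : 0 < ε) :
    |a ^ 2 - b ^ 2| ≤ (a - b) ^ 2 / ε + ε / 2 * (a ^ 2 + b ^ 2) := by
  have h : ∀ x y : ℝ, x * y ≤ x ^ 2 / ε + ε / 4 * y ^ 2 := fun x y => by
    rw [div_add' _ _ _ hε.ne', le_div_iff₀ hε]
    nlinarith [sq_nonneg (x - ε * y / 2)]
  have hab : (a + b) ^ 2 ≤ 2 * (a ^ 2 + b ^ 2) := by nlinarith [sq_nonneg (a - b)]
  have h1 := h (a - b) (a + b)
  have h2 := h (b - a) (a + b)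
  rw [show (b - a) ^ 2 = (a - b) ^ 2 by ring] at h2
  rw [abs_le]
  constructor <;> nlinarith

theorem abs_sqWeightMean_inv_smul_sub_le {ξ : S → ℝ} (hξ : Summable fun s => ξ s ^ 2)
    (hξ0 : ∑' s, ξ s ^ 2 ≠ 0) {g : G} {ε : ℝ} (hε : 0 < ε)
    (hg : ∑' s, (ξ (g⁻¹ • s) - ξ s) ^ 2 ≤ ε ^ 2 * ∑' s, ξ s ^ 2) (A : Set S) :
    |sqWeightMean ξ (g⁻¹ • A) - sqWeightMean ξ A| ≤ 2 * ε := by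
  set T := ∑' s, ξ s ^ 2
  set η := fun s => ξ (g⁻¹ • s)
  have hT : 0 < T := (tsum_nonneg fun s => sq_nonneg _).lt_of_ne' hξ0
  have hη : Summable fun s => η s ^ 2 :=
    ((MulAction.toPerm g⁻¹).summable_iff (f := fun s => ξ s ^ 2)).2 hξ
  have hηT : ∑' s, η s ^ 2 = T := (MulAction.toPerm g⁻¹).tsum_eq fun s => ξ s ^ 2
  have hdiff : Summable fun s => (η s - ξ s) ^ 2 :=
    ((hη.add hξ).mul_left 2).of_nonneg_of_le (fun s => sq_nonneg _)
      fun s => by nlinarith [sq_nonneg (η s + ξ s)]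
  have hpt : ∀ s, ‖A.indicator (fun s => η s ^ 2) s - A.indicator (fun s => ξ s ^ 2) s‖ ≤
      (η s - ξ s) ^ 2 / ε + ε / 2 * (η s ^ 2 + ξ s ^ 2) := fun s => by
    by_cases hs : s ∈ A
    · simpa [hs] using abs_sq_sub_sq_le hε
    · simp only [indicator_of_notMem hs, sub_zero, norm_zero]
      positivity
  have hnum :=
    tsum_of_norm_bounded ((hdiff.div_const ε).add ((hη.add hξ).mul_left (ε / 2))).hasSum hpt
  rw [sqWeightMean, sqWeightMean, tsum_indicator_smul_set, div_sub_div_same, abs_div,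
    abs_of_pos hT, div_le_iff₀ hT, ← Summable.tsum_sub (hη.indicator A) (hξ.indicator A)]
  calc |∑' s, (A.indicator (fun s => η s ^ 2) s - A.indicator (fun s => ξ s ^ 2) s)|
      ≤ ∑' s, ((η s - ξ s) ^ 2 / ε + ε / 2 * (η s ^ 2 + ξ s ^ 2)) := hnum
    _ = (∑' s, (η s - ξ s) ^ 2) / ε + ε / 2 * (T + T) := by
      rw [Summable.tsum_add (hdiff.div_const ε) ((hη.add hξ).mul_left (ε / 2)), tsum_div_const,
        tsum_mul_left, Summable.tsum_add hη hξ, hηT]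
    _ ≤ ε ^ 2 * T / ε + ε / 2 * (T + T) := by gcongr
    _ = 2 * ε * T := by field_simp; ring

theorem exists_invariant_isMean_of_tendsto {ι : Type*} {l : Filter ι} [l.NeBot]
    {ν : ι → Set S → ℝ} (hν : ∀ i, IsMean (ν i))
    (hinv : ∀ (g : G) (A : Set S), Tendsto (fun i => ν i (g • A) - ν i A) l (𝓝 0)) :
    ∃ m : Set S → ℝ, IsMean m ∧ ∀ (g : G) A, m (g • A) = m A := by
  obtain ⟨U, hU⟩ := Ultrafilter.exists_le l
  have hK : IsCompact (univ.pi fun _ : Set S => Icc (0 : ℝ) 1) :=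
    isCompact_univ_pi fun _ => isCompact_Icc
  obtain ⟨m, -, hUm⟩ := hK.ultrafilter_le_nhds (U.map ν) <| by
    rw [Ultrafilter.coe_map, le_principal_iff]
    exact mem_map.2 <| univ_mem' fun i =>
      mem_univ_pi.2 fun A => ⟨(hν i).nonneg A, (hν i).le_one A⟩
  have hlim : ∀ A, Tendsto (fun i => ν i A) U (𝓝 (m A)) := tendsto_pi_nhds.1 hUm
  refine ⟨m, ⟨?_, fun A => ?_, fun A B hAB => ?_⟩, fun g A => ?_⟩
  · exact tendsto_nhds_unique (hlim univ) (by simp [(hν _).map_univ])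
  · exact ge_of_tendsto' (hlim A) fun i => (hν i).nonneg A
  · refine tendsto_nhds_unique (hlim (A ∪ B)) ?_
    simpa only [(hν _).map_union A B hAB] using (hlim A).add (hlim B)
  · exact sub_eq_zero.1 (tendsto_nhds_unique ((hlim _).sub (hlim A)) ((hinv g A).mono_left hU))

theorem exists_invariant_isMean_of_almost_invariant
    (H : ∀ (F : Finset G) (ε : ℝ), 0 < ε →
      ∃ ξ : S → ℝ, Summable (fun s => ξ s ^ 2) ∧ (∑' s, ξ s ^ 2) ≠ 0 ∧
        ∀ g ∈ F, ∑' s, (ξ (g⁻¹ • s) - ξ s) ^ 2 ≤ ε ^ 2 * ∑' s, ξ s ^ 2) :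
    ∃ m : Set S → ℝ, IsMean m ∧ ∀ (g : G) A, m (g • A) = m A := by
  classical
  choose ξ hξ hξ0 hξF using fun p : Finset G × ℕ =>
    H p.1 (1 / (p.2 + 1)) Nat.one_div_pos_of_nat
  refine exists_invariant_isMean_of_tendsto (l := atTop)
    (fun p => isMean_sqWeightMean (hξ p) (hξ0 p)) fun g A => ?_
  have hsnd : Tendsto (fun p : Finset G × ℕ => p.2) atTop atTop := by
    rw [← prod_atTop_atTop_eq]
    exact tendsto_snd
  have hε : Tendsto (fun p : Finset G × ℕ => 2 * (1 / ((p.2 : ℝ) + 1))) atTop (𝓝 0) := by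
    simpa using ((tendsto_one_div_add_atTop_nhds_zero_nat (𝕜 := ℝ)).comp hsnd).const_mul 2
  refine squeeze_zero_norm' ?_ hε
  filter_upwards [eventually_ge_atTop ({g⁻¹}, 0)] with p hp
  simpa using abs_sqWeightMean_inv_smul_sub_le (hξ p) (hξ0 p) Nat.one_div_pos_of_nat
    (hξF p g⁻¹ (Finset.singleton_subset_iff.1 hp.1)) A

end

theorem invariant_mean_iff_almost_invariant_vectors_general
    (G : Type*) [Group G] (S : Type*) [MulAction G S] :
    (∃ m : Set S → ℝ, m Set.univ = 1 ∧ (∀ A, 0 ≤ m A) ∧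
        (∀ A B, Disjoint A B → m (A ∪ B) = m A + m B) ∧
        (∀ (g : G) (A : Set S), m (g • A) = m A)) ↔
      (∀ (F : Finset G) (ε : ℝ), 0 < ε →
        ∃ ξ : S → ℝ, Summable (fun s => ξ s ^ 2) ∧ (∑' s, ξ s ^ 2) ≠ 0 ∧
          ∀ g ∈ F, ∑' s, (ξ (g⁻¹ • s) - ξ s) ^ 2 ≤ ε ^ 2 * ∑' s, ξ s ^ 2) := by
  constructor
  · rintro ⟨m, hm_univ, hm_nonneg, hm_union, hinv⟩ F ε hε
    obtain ⟨f, hf, hfF⟩ :=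
      IsMean.exists_norm_translateSub_lt ⟨hm_univ, hm_nonneg, hm_union⟩ hinv F (pow_pos hε 2)
    exact exists_almost_invariant_of_norm_translateSub_le hf hfF.le
  · intro H
    obtain ⟨m, hm, hinv⟩ := exists_invariant_isMean_of_almost_invariant H
    exact ⟨m, hm.map_univ, hm.nonneg, hm.map_union, hinv⟩

/-- a countable group action on a countable set admits an invariant mean
iff it admits almost-invariant `ℓ²`-vectors. -/
theorem invariant_mean_iff_almost_invariant_vectors
    (G : Type*) [Group G] [Countable G] (S : Type*) [Countable S] [MulAction G S] :
    (∃ m : Set S → ℝ, m Set.univ = 1 ∧ (∀ A, 0 ≤ m A) ∧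
        (∀ A B, Disjoint A B → m (A ∪ B) = m A + m B) ∧
        (∀ (g : G) (A : Set S), m (g • A) = m A)) ↔
      (∀ (F : Finset G) (ε : ℝ), 0 < ε →
        ∃ ξ : S → ℝ, Summable (fun s => ξ s ^ 2) ∧ (∑' s, ξ s ^ 2) ≠ 0 ∧
          ∀ g ∈ F, ∑' s, (ξ (g⁻¹ • s) - ξ s) ^ 2 ≤ ε ^ 2 * ∑' s, ξ s ^ 2) :=
  invariant_mean_iff_almost_invariant_vectors_general G S
end
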